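/- For the Pauli-4 POVM, the adjoint inverse channel satisfies (M₁⁻¹)†(P_α) = (2−√3)I + (3+√3)P_α − (3−√3)Σ_{β≠α} P_β for each Pauli matrix P_α ∈ {σ_x,σ_y,σ_z}, and (M₁⁻¹)†(I) = I, where M₁ is the measurement channel M₁(ρ) = tr(ρM₀)|0⟩⟨0| + tr(ρM₁)|+⟩⟨+| + tr(ρM₂)|l⟩⟨l| + tr(ρM₃)|t⟩⟨t|. -/

import Mathlib

/-! Since `M1chan ∘ Minv = id`, the map `Madj = Minv†` is the inverse of `M1chan†`, so by
nondegeneracy of the Hilbert–Schmidt pairing `Madj A = C` as soon as `M1chan† C = A`. A channel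
`X ↦ ∑ₖ tr(X Eₖ) Pₖ` has adjoint `C ↦ ∑ₖ tr(Pₖ C) Eₖ` when all `Eₖ`, `Pₖ` are Hermitian, and in
Bloch form `(1 + r⃗·σ⃗)/2` the Pauli-4 effects and states make this adjoint explicit; the four
identities are then a finite computation with `√3² = 3`. -/

open Matrix Complex
open scoped ComplexOrder

noncomputable def ket0 : Fin 2 → ℂ := ![1, 0]
noncomputable def ket1 : Fin 2 → ℂ := ![0, 1]
noncomputable def ketP : Fin 2 → ℂ := ![(Real.sqrt 2)⁻¹, (Real.sqrt 2)⁻¹]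
noncomputable def ketM : Fin 2 → ℂ := ![(Real.sqrt 2)⁻¹, -(Real.sqrt 2)⁻¹]
noncomputable def ketL : Fin 2 → ℂ := ![(Real.sqrt 2)⁻¹, Complex.I * (Real.sqrt 2)⁻¹]
noncomputable def ketR : Fin 2 → ℂ := ![(Real.sqrt 2)⁻¹, -Complex.I * (Real.sqrt 2)⁻¹]

/-- The rank-one projector |ψ⟩⟨ψ|. -/
noncomputable def proj (ψ : Fin 2 → ℂ) : Matrix (Fin 2) (Fin 2) ℂ :=
  Matrix.vecMulVec ψ (star ψ)

noncomputable def sx : Matrix (Fin 2) (Fin 2) ℂ := !![0, 1; 1, 0]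
noncomputable def sy : Matrix (Fin 2) (Fin 2) ℂ := !![0, -Complex.I; Complex.I, 0]
noncomputable def sz : Matrix (Fin 2) (Fin 2) ℂ := !![1, 0; 0, -1]

/-- The six Pauli eigenstates. -/
noncomputable def ψ6 : Fin 6 → (Fin 2 → ℂ) := ![ket0, ket1, ketP, ketM, ketL, ketR]

/-- The Pauli-6 POVM elements. -/
noncomputable def M6 (a : Fin 6) : Matrix (Fin 2) (Fin 2) ℂ := (3 : ℂ)⁻¹ • proj (ψ6 a)

/-- The Pauli-4 POVM elements. -/
noncomputable def M4 : Fin 4 → Matrix (Fin 2) (Fin 2) ℂ :=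
  ![(3 : ℂ)⁻¹ • proj ket0, (3 : ℂ)⁻¹ • proj ketP, (3 : ℂ)⁻¹ • proj ketL,
    (3 : ℂ)⁻¹ • (proj ket1 + proj ketM + proj ketR)]

/-- The projector `|t⟩⟨t|` onto the eigenvector of `M₃` with the larger
eigenvalue: the unit vector in Bloch direction `−(1,1,1)/√3`. -/
noncomputable def Tproj : Matrix (Fin 2) (Fin 2) ℂ :=
  (2 : ℂ)⁻¹ • ((1 : Matrix (Fin 2) (Fin 2) ℂ) -
    ((Real.sqrt 3 : ℝ) : ℂ)⁻¹ • (sx + sy + sz))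

/-- The Pauli-4 measurement channel. -/
noncomputable def M1chan (ρ : Matrix (Fin 2) (Fin 2) ℂ) :
    Matrix (Fin 2) (Fin 2) ℂ :=
  (ρ * M4 0).trace • proj ket0 + (ρ * M4 1).trace • proj ketP +
    (ρ * M4 2).trace • proj ketL + (ρ * M4 3).trace • Tproj

section HilbertSchmidt

variable {n ι R : Type*} [Fintype n] [Fintype ι]

theorem apply_eq_of_forall_trace_conjTranspose_mul [Ring R] [StarRing R] [PartialOrder R]
    [StarOrderedRing R] [NoZeroDivisors R] {M Minv Madj : Matrix n n R → Matrix n n R}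
    (hinv : ∀ X, M (Minv X) = X)
    (hadj : ∀ A B, ((Madj A)ᴴ * B).trace = (Aᴴ * Minv B).trace) {A C : Matrix n n R}
    (hC : ∀ X, (Cᴴ * M X).trace = (Aᴴ * X).trace) : Madj A = C := by
  have h : ∀ B, ((Madj A - C)ᴴ * B).trace = 0 := fun B => by
    rw [conjTranspose_sub, sub_mul, trace_sub, hadj, ← hC, hinv, sub_self]
  exact sub_eq_zero.mp (trace_conjTranspose_mul_self_eq_zero_iff.mp (h _))

variable [CommSemiring R] [StarRing R]

def measureChannel (E P : ι → Matrix n n R) (X : Matrix n n R) : Matrix n n R :=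
  ∑ k, (X * E k).trace • P k

def measureChannelDual (E P : ι → Matrix n n R) (C : Matrix n n R) : Matrix n n R :=
  ∑ k, ((P k)ᴴ * C).trace • (E k)ᴴ

theorem trace_conjTranspose_mul_measureChannel (E P : ι → Matrix n n R) (C X : Matrix n n R) :
    (Cᴴ * measureChannel E P X).trace = ((measureChannelDual E P C)ᴴ * X).trace := by
  simp only [measureChannel, measureChannelDual, conjTranspose_sum, conjTranspose_smul,
    conjTranspose_conjTranspose, Finset.mul_sum, Finset.sum_mul, mul_smul_comm, smul_mul_assoc,
    trace_sum, trace_smul, smul_eq_mul]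
  refine Finset.sum_congr rfl fun k _ => ?_
  rw [← trace_conjTranspose, conjTranspose_mul, conjTranspose_conjTranspose, trace_mul_comm X,
    mul_comm]

theorem measureChannelDual_eq_sum_of_isHermitian {E P : ι → Matrix n n R}
    (hE : ∀ k, (E k).IsHermitian) (hP : ∀ k, (P k).IsHermitian) (C : Matrix n n R) :
    measureChannelDual E P C = ∑ k, (P k * C).trace • E k := by
  simp only [measureChannelDual, (hE _).eq, (hP _).eq]

end HilbertSchmidt

noncomputable def pauli4States : Fin 4 → Matrix (Fin 2) (Fin 2) ℂ :=
  ![proj ket0, proj ketP, proj ketL, Tproj]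

theorem M1chan_eq_measureChannel : M1chan = measureChannel M4 pauli4States := by
  ext1 ρ
  simp [M1chan, measureChannel, Fin.sum_univ_four, pauli4States]

theorem isHermitian_proj (ψ : Fin 2 → ℂ) : (proj ψ).IsHermitian := by
  simp [IsHermitian, proj]

theorem isHermitian_sx : sx.IsHermitian := by
  ext i j; fin_cases i <;> fin_cases j <;> simp [sx]

theorem isHermitian_sy : sy.IsHermitian := by
  ext i j; fin_cases i <;> fin_cases j <;> simp [sy]

theorem isHermitian_sz : sz.IsHermitian := by
  ext i j; fin_cases i <;> fin_cases j <;> simp [sz]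

theorem isHermitian_Tproj : Tproj.IsHermitian :=
  (isHermitian_one.sub (((isHermitian_sx.add isHermitian_sy).add isHermitian_sz).smul
    (IsSelfAdjoint.inv₀ (Complex.conj_ofReal _)))).smul (IsSelfAdjoint.ofNat 2).inv₀

theorem isHermitian_M4 (k : Fin 4) : (M4 k).IsHermitian := by
  fin_cases k <;> refine IsHermitian.smul ?_ (IsSelfAdjoint.ofNat 3).inv₀
  exacts [isHermitian_proj _, isHermitian_proj _, isHermitian_proj _,
    ((isHermitian_proj _).add (isHermitian_proj _)).add (isHermitian_proj _)]

theorem isHermitian_pauli4States (k : Fin 4) : (pauli4States k).IsHermitian := by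
  fin_cases k
  exacts [isHermitian_proj _, isHermitian_proj _, isHermitian_proj _, isHermitian_Tproj]

theorem ofReal_sqrt_two_sq : ((√2 : ℝ) : ℂ) ^ 2 = 2 := by
  rw [← Complex.ofReal_pow, Real.sq_sqrt zero_le_two]; norm_num

theorem ofReal_sqrt_three_sq : ((√3 : ℝ) : ℂ) ^ 2 = 3 := by
  rw [← Complex.ofReal_pow, Real.sq_sqrt zero_le_three]; norm_num

theorem ofReal_sqrt_three_inv : ((√3 : ℝ) : ℂ)⁻¹ = ((√3 : ℝ) : ℂ) / 3 := by
  rw [eq_div_iff three_ne_zero, ← ofReal_sqrt_three_sq, sq, inv_mul_cancel_left₀]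
  exact_mod_cast (Real.sqrt_pos.mpr zero_lt_three).ne'

theorem proj_apply (ψ : Fin 2 → ℂ) (i j : Fin 2) : proj ψ i j = ψ i * star (ψ j) := rfl

theorem proj_ket0 : proj ket0 = (2 : ℂ)⁻¹ • (1 + sz) := by
  ext i j; fin_cases i <;> fin_cases j <;> norm_num [proj_apply, ket0, sz]

theorem proj_ket1 : proj ket1 = (2 : ℂ)⁻¹ • (1 - sz) := by
  ext i j; fin_cases i <;> fin_cases j <;> norm_num [proj_apply, ket1, sz]

theorem proj_ketP : proj ketP = (2 : ℂ)⁻¹ • (1 + sx) := by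
  ext i j
  fin_cases i <;> fin_cases j <;> simp [proj_apply, ketP, sx] <;> ring_nf <;>
    simp [ofReal_sqrt_two_sq]

theorem proj_ketM : proj ketM = (2 : ℂ)⁻¹ • (1 - sx) := by
  ext i j
  fin_cases i <;> fin_cases j <;> simp [proj_apply, ketM, sx] <;> ring_nf <;>
    simp [ofReal_sqrt_two_sq]

theorem proj_ketL : proj ketL = (2 : ℂ)⁻¹ • (1 + sy) := by
  ext i j
  fin_cases i <;> fin_cases j <;> simp [proj_apply, ketL, sy] <;> ring_nf <;>
    simp [ofReal_sqrt_two_sq, mul_comm]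

theorem proj_ketR : proj ketR = (2 : ℂ)⁻¹ • (1 - sy) := by
  ext i j
  fin_cases i <;> fin_cases j <;> simp [proj_apply, ketR, sy] <;> ring_nf <;>
    simp [ofReal_sqrt_two_sq, mul_comm]

theorem measureChannelDual_pauli4 :
    measureChannelDual M4 pauli4States (((2 - √3 : ℝ) : ℂ) • 1 +
        ((3 + √3 : ℝ) : ℂ) • sx - ((3 - √3 : ℝ) : ℂ) • (sy + sz)) = sx ∧
    measureChannelDual M4 pauli4States (((2 - √3 : ℝ) : ℂ) • 1 +
        ((3 + √3 : ℝ) : ℂ) • sy - ((3 - √3 : ℝ) : ℂ) • (sx + sz)) = sy ∧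
    measureChannelDual M4 pauli4States (((2 - √3 : ℝ) : ℂ) • 1 +
        ((3 + √3 : ℝ) : ℂ) • sz - ((3 - √3 : ℝ) : ℂ) • (sx + sy)) = sz ∧
    measureChannelDual M4 pauli4States 1 = 1 := by
  simp only [measureChannelDual_eq_sum_of_isHermitian isHermitian_M4 isHermitian_pauli4States,
    Fin.sum_univ_four]
  simp only [M4, pauli4States, cons_val_zero, cons_val_one, cons_val_two, cons_val_three, head_cons,
    tail_cons, proj_ket0, proj_ket1, proj_ketP, proj_ketM, proj_ketL, proj_ketR, Tproj,
    ofReal_sqrt_three_inv]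
  refine ⟨?_, ?_, ?_, ?_⟩ <;> ext i j <;> fin_cases i <;> fin_cases j <;>
    simp [trace_fin_two, mul_apply, Fin.sum_univ_two, sx, sy, sz] <;> ring_nf <;>
    simp only [ofReal_sqrt_three_sq, I_sq, I_pow_three] <;> ring_nf

theorem pauli4_adjoint_inverse_channel_general
    (Minv Madj : Matrix (Fin 2) (Fin 2) ℂ →ₗ[ℂ] Matrix (Fin 2) (Fin 2) ℂ)
    (hinv₂ : ∀ X, M1chan (Minv X) = X)
    (hadj : ∀ A B : Matrix (Fin 2) (Fin 2) ℂ,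
      ((Madj A)ᴴ * B).trace = (Aᴴ * Minv B).trace) :
    (Madj sx = ((2 - Real.sqrt 3 : ℝ) : ℂ) • 1 +
        ((3 + Real.sqrt 3 : ℝ) : ℂ) • sx - ((3 - Real.sqrt 3 : ℝ) : ℂ) • (sy + sz)) ∧
    (Madj sy = ((2 - Real.sqrt 3 : ℝ) : ℂ) • 1 +
        ((3 + Real.sqrt 3 : ℝ) : ℂ) • sy - ((3 - Real.sqrt 3 : ℝ) : ℂ) • (sx + sz)) ∧
    (Madj sz = ((2 - Real.sqrt 3 : ℝ) : ℂ) • 1 +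
        ((3 + Real.sqrt 3 : ℝ) : ℂ) • sz - ((3 - Real.sqrt 3 : ℝ) : ℂ) • (sx + sy)) ∧
    Madj 1 = 1 := by
  have hMadj {A C : Matrix (Fin 2) (Fin 2) ℂ} (h : measureChannelDual M4 pauli4States C = A) :
      Madj A = C :=
    apply_eq_of_forall_trace_conjTranspose_mul hinv₂ hadj fun X => by
      rw [M1chan_eq_measureChannel, trace_conjTranspose_mul_measureChannel, h]
  obtain ⟨hx, hy, hz, h1⟩ := measureChannelDual_pauli4
  exact ⟨hMadj hx, hMadj hy, hMadj hz, hMadj h1⟩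

/-- For the Pauli-4 POVM, the adjoint of the inverse measurement channel
satisfies `(M₁⁻¹)†(P_α) = (2−√3)I + (3+√3)P_α − (3−√3)Σ_{β≠α} P_β` for each
Pauli matrix, and `(M₁⁻¹)†(I) = I`. -/
theorem pauli4_adjoint_inverse_channel
    (Minv Madj : Matrix (Fin 2) (Fin 2) ℂ →ₗ[ℂ] Matrix (Fin 2) (Fin 2) ℂ)
    (hinv₁ : ∀ X, Minv (M1chan X) = X)
    (hinv₂ : ∀ X, M1chan (Minv X) = X)
    (hadj : ∀ A B : Matrix (Fin 2) (Fin 2) ℂ,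
      ((Madj A)ᴴ * B).trace = (Aᴴ * Minv B).trace) :
    (Madj sx = ((2 - Real.sqrt 3 : ℝ) : ℂ) • 1 +
        ((3 + Real.sqrt 3 : ℝ) : ℂ) • sx - ((3 - Real.sqrt 3 : ℝ) : ℂ) • (sy + sz)) ∧
    (Madj sy = ((2 - Real.sqrt 3 : ℝ) : ℂ) • 1 +
        ((3 + Real.sqrt 3 : ℝ) : ℂ) • sy - ((3 - Real.sqrt 3 : ℝ) : ℂ) • (sx + sz)) ∧
    (Madj sz = ((2 - Real.sqrt 3 : ℝ) : ℂ) • 1 +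
        ((3 + Real.sqrt 3 : ℝ) : ℂ) • sz - ((3 - Real.sqrt 3 : ℝ) : ℂ) • (sx + sy)) ∧
    Madj 1 = 1 :=
  pauli4_adjoint_inverse_channel_general Minv Madj hinv₂ hadj
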